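/- arXiv:1703.03588 — 4 statements merged into one kernel-verified Lean document; each statement's English description precedes it below -/
import Mathlib

section
/- Let f \in S^*[A,B] with -1 \le B \le 1 < A, let t be a positive integer, and write (z/f(z))^t = 1 + \sum_{j=1}^{\infty} a_j^{(-t)} z^j for z \in \mathbb{D} (this is well defined since f(z)/z extends analytically to \mathbb{D} with value 1 at 0 and is non-vanishing). Then for every integer s \ge 1, s^2 |a_s^{(-t)}|^2 \le (A-B)^2 t^2 + \sum_{j=1}^{s-1} \big(((A-B)t + Bj)^2 - j^2\big) |a_j^{(-t)}|^2. -/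
open Complex Metric Finset

noncomputable section

/-- The class `P[A,B]` of analytic functions `p` on the unit disc with `p 0 = 1`
subordinate to `(1 + A z)/(1 + B z)`. -/
def MemP (A B : ℝ) (p : ℂ → ℂ) : Prop :=
  AnalyticOnNhd ℂ p (ball (0 : ℂ) 1) ∧ p 0 = 1 ∧
    ∃ w : ℂ → ℂ, AnalyticOnNhd ℂ w (ball (0 : ℂ) 1) ∧ w 0 = 0 ∧
      (∀ z ∈ ball (0 : ℂ) 1, ‖w z‖ < 1) ∧
      (∀ z ∈ ball (0 : ℂ) 1, p z = (1 + (A : ℂ) * w z) / (1 + (B : ℂ) * w z))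

/-- The class `S*[A,B]` of generalized Janowski starlike functions: normalized analytic
functions `f` on the unit disc, non-vanishing off the origin, with `z f'(z)/f(z) ∈ P[A,B]`. -/
def MemSstar (A B : ℝ) (f : ℂ → ℂ) : Prop :=
  AnalyticOnNhd ℂ f (ball (0 : ℂ) 1) ∧ f 0 = 0 ∧ deriv f 0 = 1 ∧
    (∀ z ∈ ball (0 : ℂ) 1, z ≠ 0 → f z ≠ 0) ∧
    ∃ p : ℂ → ℂ, MemP A B p ∧ ∀ z ∈ ball (0 : ℂ) 1, z ≠ 0 → p z = z * deriv f z / f z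

/-!
Put `G = (z / f)^t = ∑ aⱼ zʲ`. Logarithmic differentiation together with the subordination
`z f' / f = (1 + A w) / (1 + B w)` gives `z G' = w · ((B - A) t G - B z G')`, that is
`∑ j aⱼ zʲ = w · H` with `H = ∑ ((B - A) t - B j) aⱼ zʲ`, `w 0 = 0` and `‖w‖ < 1`.
Clunie's method: because `w 0 = 0`, the coefficients of index `≤ s` of `w · H` only involve the
truncation `S` of `H` to degree `< s`, so they are those of `w · S`. Since `‖w S‖ ≤ ‖S‖`,
Parseval on the circle of radius `r < 1` (exact at the `N`-th roots of unity for partial sums of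
length `N`) bounds the sum of their squared norms by that of `S`, and `r → 1` gives
`∑_{j ≤ s} j² ‖aⱼ‖² ≤ ∑_{j < s} ((A - B) t + B j)² ‖aⱼ‖²`.
-/

open Filter Topology FormalMultilinearSeries
open scoped ComplexConjugate

def HasPowerSeriesOnUnitDisc (φ : ℂ → ℂ) (c : ℕ → ℂ) : Prop :=
  ∀ z ∈ ball (0 : ℂ) 1, HasSum (fun j => c j * z ^ j) (φ z)

theorem mem_eball_zero_one_iff {z : ℂ} : z ∈ eball (0 : ℂ) 1 ↔ z ∈ ball (0 : ℂ) 1 := by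
  rw [← ENNReal.coe_one, eball_coe, NNReal.coe_one]

theorem hasPowerSeriesOnUnitDisc_tsum {a : ℕ → ℂ} {g : ℂ → ℂ}
    (h : ∀ z ∈ ball (0 : ℂ) 1, z ≠ 0 → HasSum (fun j => a j * z ^ j) (g z)) :
    HasPowerSeriesOnUnitDisc (fun z => ∑' j, a j * z ^ j) a := fun z hz => by
  rcases eq_or_ne z 0 with rfl | hz0
  · exact (hasSum_single 0 fun j hj => by simp [hj]).summable.hasSum
  · exact (h z hz hz0).summable.hasSum

namespace HasPowerSeriesOnUnitDisc

variable {φ ψ : ℂ → ℂ} {c d : ℕ → ℂ}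

theorem summable_norm (hφ : HasPowerSeriesOnUnitDisc φ c) {z : ℂ} (hz : z ∈ ball (0 : ℂ) 1) :
    Summable fun j => ‖c j * z ^ j‖ :=
  summable_norm_iff.mpr (hφ z hz).summable

theorem hasFPowerSeriesOnBall (hφ : HasPowerSeriesOnUnitDisc φ c) :
    HasFPowerSeriesOnBall φ (ofScalars ℂ c) 0 1 where
  r_le := by
    refine ENNReal.le_of_forall_nnreal_lt fun r hr => le_radius_of_summable_norm _ ?_
    have hr : ((r : ℝ) : ℂ) ∈ ball (0 : ℂ) 1 := by simpa using hr
    simpa [ofScalars_norm] using hφ.summable_norm hr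
  r_pos := one_pos
  hasSum {y} hy := by
    simpa [ofScalars_apply_eq, mul_comm] using hφ y (mem_eball_zero_one_iff.mp hy)

theorem unique (hc : HasPowerSeriesOnUnitDisc φ c) (hd : HasPowerSeriesOnUnitDisc φ d) : c = d :=
  ofScalars_series_injective ℂ ℂ <|
    hc.hasFPowerSeriesOnBall.hasFPowerSeriesAt.eq_formalMultilinearSeries
      hd.hasFPowerSeriesOnBall.hasFPowerSeriesAt

theorem coeff_zero (hφ : HasPowerSeriesOnUnitDisc φ c) : c 0 = φ 0 := by
  simpa using (hasSum_single 0 fun j hj => by simp [hj]).unique (hφ 0 (mem_ball_self one_pos))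

theorem mul (hφ : HasPowerSeriesOnUnitDisc φ c) (hψ : HasPowerSeriesOnUnitDisc ψ d) :
    HasPowerSeriesOnUnitDisc (fun z => φ z * ψ z)
      (fun n => ∑ k ∈ range (n + 1), c k * d (n - k)) := by
  intro z hz
  have h := hasSum_sum_range_mul_of_summable_norm (hφ.summable_norm hz) (hψ.summable_norm hz)
  rw [(hφ z hz).tsum_eq, (hψ z hz).tsum_eq] at h
  have e (n : ℕ) : ∑ k ∈ range (n + 1), c k * z ^ k * (d (n - k) * z ^ (n - k)) =
      (∑ k ∈ range (n + 1), c k * d (n - k)) * z ^ n := by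
    rw [sum_mul]
    refine sum_congr rfl fun k hk => ?_
    rw [← pow_sub_mul_pow z (Nat.le_of_lt_succ (mem_range.mp hk))]
    ring
  simpa only [e] using h

theorem mul_deriv (hφ : HasPowerSeriesOnUnitDisc φ c) :
    HasPowerSeriesOnUnitDisc (fun z => z * deriv φ z) (fun j => j * c j) := by
  intro z hz
  have h := (hφ.hasFPowerSeriesOnBall.fderiv.hasSum (mem_eball_zero_one_iff.mpr hz)).mapL
    (ContinuousLinearMap.apply ℂ ℂ z)
  simp only [zero_add, ContinuousLinearMap.apply_apply, derivSeries_apply_diag,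
    ofScalars_apply_eq, smul_eq_mul] at h
  rw [show fderiv ℂ φ z z = z * deriv φ z by simp] at h
  refine (hasSum_nat_add_iff' 1).mp ?_
  simpa [pow_succ, mul_assoc, mul_comm, mul_left_comm] using h

theorem _root_.DifferentiableOn.exists_hasPowerSeriesOnUnitDisc
    (hφ : DifferentiableOn ℂ φ (ball (0 : ℂ) 1)) :
    ∃ c, HasPowerSeriesOnUnitDisc φ c :=
  ⟨fun n => (n.factorial : ℂ)⁻¹ * iteratedDeriv n φ 0, fun z hz => by
    simpa [smul_eq_mul, mul_comm, mul_left_comm, mul_assoc] using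
      Complex.hasSum_taylorSeries_on_ball hφ hz⟩

theorem sum_range (h : ℕ → ℂ) (s : ℕ) :
    HasPowerSeriesOnUnitDisc (fun z => ∑ j ∈ range s, h j * z ^ j)
      (fun j => if j < s then h j else 0) := by
  intro z _
  have : HasSum (fun j => (if j < s then h j else 0) * z ^ j)
      (∑ j ∈ range s, (if j < s then h j else 0) * z ^ j) :=
    hasSum_sum_of_ne_finset_zero fun j hj => by simp [mem_range.not.mp hj]
  rwa [sum_congr rfl fun j hj => by rw [if_pos (mem_range.mp hj)]] at this

end HasPowerSeriesOnUnitDisc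

theorem IsPrimitiveRoot.sum_pow_mul_conj_pow {ζ : ℂ} {N : ℕ} (hζ : IsPrimitiveRoot ζ N) {i j : ℕ}
    (hi : i < N) (hj : j < N) :
    ∑ k ∈ range N, (ζ ^ k) ^ i * conj ((ζ ^ k) ^ j) = if i = j then (N : ℂ) else 0 := by
  have hN : N ≠ 0 := by omega
  have hζ0 : ζ ≠ 0 := hζ.ne_zero hN
  have hconj : conj ζ = ζ⁻¹ := by
    simp [Complex.inv_def, normSq_eq_norm_sq, hζ.norm'_eq_one hN]
  have hterm (k : ℕ) : (ζ ^ k) ^ i * conj ((ζ ^ k) ^ j) = (ζ ^ i * (ζ ^ j)⁻¹) ^ k := by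
    simp only [map_pow, hconj]
    ring
  simp_rw [hterm]
  split_ifs with hij
  · simp [hij, hζ0]
  · have hμ : ζ ^ i * (ζ ^ j)⁻¹ ≠ 1 := fun h =>
      hij (hζ.pow_inj hi hj (mul_inv_eq_one₀ (pow_ne_zero j hζ0) |>.mp h))
    rw [geom_sum_eq hμ, mul_pow, ← pow_mul, inv_pow, ← pow_mul, mul_comm i, mul_comm j,
      pow_mul, pow_mul, hζ.pow_eq_one]
    simp

theorem IsPrimitiveRoot.sum_norm_sq_sum_mul_pow {ζ : ℂ} {N n : ℕ} (hζ : IsPrimitiveRoot ζ N)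
    (hn : n ≤ N) (b : ℕ → ℂ) :
    ∑ k ∈ range N, ‖∑ j ∈ range n, b j * (ζ ^ k) ^ j‖ ^ 2 = N * ∑ j ∈ range n, ‖b j‖ ^ 2 := by
  apply ofReal_injective
  push_cast
  simp_rw [← mul_conj', map_sum, map_mul, sum_mul_sum]
  calc ∑ k ∈ range N, ∑ i ∈ range n, ∑ j ∈ range n,
        b i * (ζ ^ k) ^ i * (conj (b j) * conj ((ζ ^ k) ^ j))
      = ∑ i ∈ range n, ∑ j ∈ range n,
          b i * conj (b j) * ∑ k ∈ range N, (ζ ^ k) ^ i * conj ((ζ ^ k) ^ j) := by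
        rw [sum_comm]
        refine sum_congr rfl fun i _ => ?_
        rw [sum_comm]
        simp_rw [mul_sum]
        exact sum_congr rfl fun j _ => sum_congr rfl fun k _ => by ring
    _ = ∑ i ∈ range n, b i * conj (b i) * N := by
        refine sum_congr rfl fun i hi => ?_
        rw [sum_congr rfl fun j hj => by
          rw [hζ.sum_pow_mul_conj_pow ((mem_range.mp hi).trans_le hn)
            ((mem_range.mp hj).trans_le hn)]]
        simp [hi]
    _ = _ := by rw [mul_sum]; exact sum_congr rfl fun i _ => by ring

theorem sum_norm_sq_mul_pow_le_of_norm_le_add {b h : ℕ → ℂ} {s N : ℕ} (hsN : s ≤ N) {r ε : ℝ}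
    (hr : 0 ≤ r) (hε : 0 ≤ ε)
    (hle : ∀ z : ℂ, ‖z‖ = r → ‖∑ j ∈ range N, b j * z ^ j‖ ≤ ‖∑ j ∈ range s, h j * z ^ j‖ + ε) :
    ∑ j ∈ range N, ‖b j‖ ^ 2 * r ^ (2 * j) ≤
      ∑ j ∈ range s, ‖h j‖ ^ 2 * r ^ (2 * j) + ε * (2 * ∑ j ∈ range s, ‖h j‖ * r ^ j + ε) := by
  rcases N.eq_zero_or_pos with rfl | hN
  · obtain rfl : s = 0 := by omega
    simpa using mul_nonneg hε hε
  set K := ∑ j ∈ range s, ‖h j‖ * r ^ j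
  obtain ⟨ζ, hζ⟩ : ∃ ζ : ℂ, IsPrimitiveRoot ζ N := ⟨_, isPrimitiveRoot_exp N hN.ne'⟩
  have hnorm (k : ℕ) : ‖(r : ℂ) * ζ ^ k‖ = r := by
    simp [hζ.norm'_eq_one hN.ne', abs_of_nonneg hr]
  have hQ (z : ℂ) (hz : ‖z‖ = r) : ‖∑ j ∈ range s, h j * z ^ j‖ ≤ K :=
    (norm_sum_le _ _).trans_eq (by simp [hz, K])
  have hpoint (k : ℕ) : ‖∑ j ∈ range N, b j * ((r : ℂ) * ζ ^ k) ^ j‖ ^ 2 ≤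
      ‖∑ j ∈ range s, h j * ((r : ℂ) * ζ ^ k) ^ j‖ ^ 2 + ε * (2 * K + ε) := by
    have h1 := hle _ (hnorm k)
    have h2 := hQ _ (hnorm k)
    nlinarith [norm_nonneg (∑ j ∈ range N, b j * ((r : ℂ) * ζ ^ k) ^ j)]
  have hscale (c : ℕ → ℂ) (m k : ℕ) : ∑ j ∈ range m, c j * ((r : ℂ) * ζ ^ k) ^ j =
      ∑ j ∈ range m, c j * (r : ℂ) ^ j * (ζ ^ k) ^ j :=
    sum_congr rfl fun j _ => by ring
  have hnorm_sq (c : ℂ) (j : ℕ) : ‖c * (r : ℂ) ^ j‖ ^ 2 = ‖c‖ ^ 2 * r ^ (2 * j) := by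
    simp [abs_of_nonneg hr, mul_pow, pow_mul']
  have hsum := sum_le_sum fun k (_ : k ∈ range N) => hpoint k
  rw [sum_add_distrib, sum_const, card_range, nsmul_eq_mul] at hsum
  simp_rw [hscale] at hsum
  rw [hζ.sum_norm_sq_sum_mul_pow le_rfl, hζ.sum_norm_sq_sum_mul_pow hsN, ← mul_add] at hsum
  simp_rw [hnorm_sq] at hsum
  exact le_of_mul_le_mul_left hsum (by positivity)

namespace HasPowerSeriesOnUnitDisc

variable {φ : ℂ → ℂ} {c h : ℕ → ℂ} {s : ℕ}

theorem norm_sub_sum_range_le (hφ : HasPowerSeriesOnUnitDisc φ c) {z : ℂ} {r : ℝ} (hz : ‖z‖ ≤ r)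
    (hr : r < 1) (N : ℕ) :
    ‖φ z - ∑ j ∈ range N, c j * z ^ j‖ ≤ ∑' j, ‖c (j + N)‖ * r ^ (j + N) := by
  have hr0 : 0 ≤ r := (norm_nonneg z).trans hz
  have hz1 : z ∈ ball (0 : ℂ) 1 := by rw [mem_ball_zero_iff]; exact hz.trans_lt hr
  have hr1 : (r : ℂ) ∈ ball (0 : ℂ) 1 := by
    rw [mem_ball_zero_iff, norm_real, Real.norm_of_nonneg hr0]; exact hr
  have hsum : Summable fun j => ‖c (j + N)‖ * r ^ (j + N) := by
    refine (summable_nat_add_iff (f := fun j => ‖c j‖ * r ^ j) N).mpr ?_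
    simpa [Real.norm_of_nonneg hr0] using hφ.summable_norm hr1
  have htail : HasSum (fun j => c (j + N) * z ^ (j + N)) (φ z - ∑ j ∈ range N, c j * z ^ j) :=
    (hasSum_nat_add_iff' N).mpr (hφ z hz1)
  refine htail.norm_le_of_bounded hsum.hasSum fun j => ?_
  rw [norm_mul, norm_pow]
  gcongr

theorem sum_norm_sq_mul_pow_le (hφ : HasPowerSeriesOnUnitDisc φ c)
    (hφh : ∀ z ∈ ball (0 : ℂ) 1, ‖φ z‖ ≤ ‖∑ j ∈ range s, h j * z ^ j‖) {r : ℝ} (hr0 : 0 ≤ r)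
    (hr1 : r < 1) (n : ℕ) :
    ∑ j ∈ range n, ‖c j‖ ^ 2 * r ^ (2 * j) ≤ ∑ j ∈ range s, ‖h j‖ ^ 2 * r ^ (2 * j) := by
  set T : ℕ → ℝ := fun N => ∑' j, ‖c (j + N)‖ * r ^ (j + N)
  set K := ∑ j ∈ range s, ‖h j‖ * r ^ j
  have hT : Tendsto T atTop (𝓝 0) := tendsto_sum_nat_add fun j => ‖c j‖ * r ^ j
  have hbound (N : ℕ) (hN : max n s ≤ N) : ∑ j ∈ range n, ‖c j‖ ^ 2 * r ^ (2 * j) ≤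
      ∑ j ∈ range s, ‖h j‖ ^ 2 * r ^ (2 * j) + T N * (2 * K + T N) := by
    refine (sum_le_sum_of_subset_of_nonneg (range_subset_range.mpr (le_of_max_le_left hN))
      fun _ _ _ => by positivity).trans
      (sum_norm_sq_mul_pow_le_of_norm_le_add (le_of_max_le_right hN) hr0
        (tsum_nonneg fun j => by positivity) fun z hz => ?_)
    have hz1 : z ∈ ball (0 : ℂ) 1 := by simpa [hz] using hr1
    calc ‖∑ j ∈ range N, c j * z ^ j‖
        ≤ ‖φ z‖ + ‖φ z - ∑ j ∈ range N, c j * z ^ j‖ := norm_le_insert _ _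
      _ ≤ _ := add_le_add (hφh z hz1) (hφ.norm_sub_sum_range_le hz.le hr1 N)
  refine ge_of_tendsto ?_ (eventually_atTop.mpr ⟨max n s, hbound⟩)
  simpa using tendsto_const_nhds.add (hT.mul (tendsto_const_nhds.add hT))

theorem sum_norm_sq_le (hφ : HasPowerSeriesOnUnitDisc φ c)
    (hφh : ∀ z ∈ ball (0 : ℂ) 1, ‖φ z‖ ≤ ‖∑ j ∈ range s, h j * z ^ j‖) (n : ℕ) :
    ∑ j ∈ range n, ‖c j‖ ^ 2 ≤ ∑ j ∈ range s, ‖h j‖ ^ 2 := by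
  have hlim (m : ℕ) (e : ℕ → ℝ) : Tendsto (fun r : ℝ => ∑ j ∈ range m, e j * r ^ (2 * j))
      (𝓝[<] 1) (𝓝 (∑ j ∈ range m, e j)) := by
    have hcont : Continuous fun r : ℝ => ∑ j ∈ range m, e j * r ^ (2 * j) := by fun_prop
    simpa using (hcont.tendsto 1).mono_left nhdsWithin_le_nhds
  refine le_of_tendsto_of_tendsto (hlim n _) (hlim s _) ?_
  filter_upwards [Ioo_mem_nhdsLT one_pos] with r hr
    using hφ.sum_norm_sq_mul_pow_le hφh hr.1.le hr.2 n

end HasPowerSeriesOnUnitDisc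

theorem HasPowerSeriesOnUnitDisc.sum_norm_sq_le_of_eq_mul {F H w : ℂ → ℂ} {b h : ℕ → ℂ}
    (hF : HasPowerSeriesOnUnitDisc F b) (hH : HasPowerSeriesOnUnitDisc H h)
    (hw : DifferentiableOn ℂ w (ball (0 : ℂ) 1)) (hw0 : w 0 = 0)
    (hw1 : ∀ z ∈ ball (0 : ℂ) 1, ‖w z‖ ≤ 1) (hFwH : ∀ z ∈ ball (0 : ℂ) 1, F z = w z * H z)
    (s : ℕ) :
    ∑ j ∈ range (s + 1), ‖b j‖ ^ 2 ≤ ∑ j ∈ range s, ‖h j‖ ^ 2 := by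
  obtain ⟨ω, hω⟩ := hw.exists_hasPowerSeriesOnUnitDisc
  have hω0 : ω 0 = 0 := hω.coeff_zero.trans hw0
  have hb : b = fun n => ∑ k ∈ range (n + 1), ω k * h (n - k) :=
    hF.unique fun z hz => hFwH z hz ▸ hω.mul hH z hz
  -- As `ω 0 = 0`, the coefficients of index `≤ s` of `w * H` only see `h` below index `s`.
  have hcoeff (n : ℕ) (hn : n ∈ range (s + 1)) :
      ∑ k ∈ range (n + 1), ω k * (if n - k < s then h (n - k) else 0) = b n := by
    rw [hb]
    refine sum_congr rfl fun k hk => ?_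
    rcases k.eq_zero_or_pos with rfl | hk0
    · simp [hω0]
    · rw [if_pos (by grind)]
  rw [sum_congr rfl fun n hn => by rw [← hcoeff n hn]]
  refine (hω.mul (sum_range h s)).sum_norm_sq_le (fun z hz => ?_) (s + 1)
  rw [norm_mul]
  exact mul_le_of_le_one_left (norm_nonneg _) (hw1 z hz)

theorem mul_deriv_eq_of_eventuallyEq_pow_div {A B : ℝ} {f G : ℂ → ℂ} {z ω : ℂ} {t : ℕ}
    (hf : DifferentiableAt ℂ f z) (hfz : f z ≠ 0) (hBω : 1 + B * ω ≠ 0)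
    (hrel : z * deriv f z / f z = (1 + A * ω) / (1 + B * ω))
    (hG : G =ᶠ[𝓝 z] fun y => (y / f y) ^ t) :
    z * deriv G z = ω * ((B - A) * t * G z - B * (z * deriv G z)) := by
  have hpow : (t : ℂ) * (z / f z) ^ (t - 1) * (z / f z) = t * (z / f z) ^ t := by
    rcases t with _ | t
    · simp
    · simp [pow_succ, mul_assoc]
  have hX : z * deriv G z = t * (z / f z) ^ t * (1 - z * deriv f z / f z) := by
    rw [hG.deriv_eq, (((hasDerivAt_id' z).fun_div hf.hasDerivAt hfz).fun_pow t).deriv, ← hpow]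
    field_simp
  have hP : z * deriv f z / f z * (1 + B * ω) = 1 + A * ω := by
    rw [hrel, div_mul_cancel₀ _ hBω]
  rw [hX, hG.eq_of_nhds]
  linear_combination (-(t * (z / f z) ^ t)) * hP

theorem one_add_ofReal_mul_ne_zero {B : ℝ} {ω : ℂ} (hB : |B| ≤ 1) (hω : ‖ω‖ < 1) :
    1 + (B : ℂ) * ω ≠ 0 := by
  have hBω : ‖(B : ℂ) * ω‖ < 1 := by
    rw [norm_mul, norm_real, Real.norm_eq_abs]
    exact (mul_le_of_le_one_left (norm_nonneg ω) hB).trans_lt hω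
  intro h
  rw [show (B : ℂ) * ω = -1 by linear_combination h] at hBω
  simp at hBω

theorem MemSstar.exists_mul_deriv_eq {A B : ℝ} {f G : ℂ → ℂ} {t : ℕ} (hf : MemSstar A B f)
    (hB : |B| ≤ 1) (hG : ∀ z ∈ ball (0 : ℂ) 1, z ≠ 0 → G =ᶠ[𝓝 z] fun y => (y / f y) ^ t) :
    ∃ w : ℂ → ℂ, DifferentiableOn ℂ w (ball (0 : ℂ) 1) ∧ w 0 = 0 ∧
      (∀ z ∈ ball (0 : ℂ) 1, ‖w z‖ ≤ 1) ∧
      ∀ z ∈ ball (0 : ℂ) 1, z * deriv G z = w z * ((B - A) * t * G z - B * (z * deriv G z)) := by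
  obtain ⟨hfa, -, -, hfne, p, ⟨-, -, w, hwa, hw0, hw1, hpw⟩, hpf⟩ := hf
  refine ⟨w, hwa.differentiableOn, hw0, fun z hz => (hw1 z hz).le, fun z hz => ?_⟩
  rcases eq_or_ne z 0 with rfl | hz0
  · simp [hw0]
  exact mul_deriv_eq_of_eventuallyEq_pow_div (hfa z hz).differentiableAt (hfne z hz hz0)
    (one_add_ofReal_mul_ne_zero hB (hw1 z hz)) ((hpf z hz hz0).symm.trans (hpw z hz))
    (hG z hz hz0)

theorem coeff_power_inequality_general (A B : ℝ) (hB₁ : -1 ≤ B) (hB₂ : B ≤ 1)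
    (f : ℂ → ℂ) (hf : MemSstar A B f)
    (t : ℕ)
    (a : ℕ → ℂ) (ha0 : a 0 = 1)
    (ha : ∀ z ∈ ball (0 : ℂ) 1, z ≠ 0 →
      HasSum (fun j : ℕ => a j * z ^ j) ((z / f z) ^ t))
    (s : ℕ) (hs : 1 ≤ s) :
    (s : ℝ) ^ 2 * ‖a s‖ ^ 2 ≤ (A - B) ^ 2 * (t : ℝ) ^ 2 +
      ∑ j ∈ Finset.Ico 1 s,
        ((((A - B) * (t : ℝ) + B * (j : ℝ)) ^ 2 - (j : ℝ) ^ 2) * ‖a j‖ ^ 2) := by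
  set G : ℂ → ℂ := fun z => ∑' j, a j * z ^ j
  have hG : HasPowerSeriesOnUnitDisc G a := hasPowerSeriesOnUnitDisc_tsum ha
  have hGf (z : ℂ) (hz : z ∈ ball (0 : ℂ) 1) (hz0 : z ≠ 0) :
      G =ᶠ[𝓝 z] fun y => (y / f y) ^ t := by
    filter_upwards [isOpen_ball.mem_nhds hz, isOpen_ne.mem_nhds hz0] with y hy hy0
    exact (ha y hy hy0).tsum_eq
  obtain ⟨w, hw, hw0, hw1, hFwH⟩ := hf.exists_mul_deriv_eq (abs_le.mpr ⟨hB₁, hB₂⟩) hGf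
  have hH : HasPowerSeriesOnUnitDisc (fun z => (B - A) * t * G z - B * (z * deriv G z))
      (fun j => ((-((A - B) * t + B * j) : ℝ) : ℂ) * a j) := fun z hz => by
    convert ((hG z hz).mul_left (((B : ℂ) - A) * t)).sub ((hG.mul_deriv z hz).mul_left (B : ℂ))
      using 1
    · rfl
    · ext j
      push_cast
      ring
  have key := hG.mul_deriv.sum_norm_sq_le_of_eq_mul hH hw hw0 hw1 hFwH s
  simp only [norm_mul, norm_natCast, norm_real, norm_neg, Real.norm_eq_abs, mul_pow, sq_abs] at key
  rw [sum_range_succ, range_eq_Ico, sum_eq_sum_Ico_succ_bot hs, sum_eq_sum_Ico_succ_bot hs,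
    ha0] at key
  rw [sum_congr rfl fun j _ => sub_mul _ _ _, sum_sub_distrib]
  norm_num [mul_pow] at key
  linarith

/-- For `f ∈ S*[A,B]` with `-1 ≤ B ≤ 1 < A`, a positive integer `t`, and
`(z/f(z))^t = 1 + ∑_{j≥1} a_j z^j` on the disc, for every `s ≥ 1`:
`s² |a_s|² ≤ (A-B)²t² + ∑_{j=1}^{s-1} (((A-B)t + Bj)² - j²) |a_j|²`. -/
theorem coeff_power_inequality (A B : ℝ) (hB₁ : -1 ≤ B) (hB₂ : B ≤ 1) (hA : 1 < A)
    (f : ℂ → ℂ) (hf : MemSstar A B f)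
    (t : ℕ) (ht : 1 ≤ t)
    (a : ℕ → ℂ) (ha0 : a 0 = 1)
    (ha : ∀ z ∈ ball (0 : ℂ) 1, z ≠ 0 →
      HasSum (fun j : ℕ => a j * z ^ j) ((z / f z) ^ t))
    (s : ℕ) (hs : 1 ≤ s) :
    (s : ℝ) ^ 2 * ‖a s‖ ^ 2 ≤ (A - B) ^ 2 * (t : ℝ) ^ 2 +
      ∑ j ∈ Finset.Ico 1 s,
        ((((A - B) * (t : ℝ) + B * (j : ℝ)) ^ 2 - (j : ℝ) ^ 2) * ‖a j‖ ^ 2) :=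
  coeff_power_inequality_general A B hB₁ hB₂ f hf t a ha0 ha s hs
end
end

section
/- Let -1 \le B < 1 and let f \in \mathfrak{I}[1,B]. Let g be the analytic function on \mathbb{D} with g(0) = 0 and g'(z) = (1-z)/(1-Bz). Write f^{-1}(w) = w + \sum_{n=2}^{\infty} \gamma_n w^n and g^{-1}(w) = w + \sum_{n=2}^{\infty} A_n w^n in some neighbourhood of the origin. Then |\gamma_n| \le A_n for every n \ge 2. -/
open Complex Metric Finset

noncomputable section

/-- The class `𝔦[A,B]`: univalent normalized analytic functions `f` on the unit disc
with `f' ∈ P[A,B]`. -/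
def MemI (A B : ℝ) (f : ℂ → ℂ) : Prop :=
  AnalyticOnNhd ℂ f (ball (0 : ℂ) 1) ∧ Set.InjOn f (ball (0 : ℂ) 1) ∧
    f 0 = 0 ∧ deriv f 0 = 1 ∧ MemP A B (deriv f)

/-!
With `φ_j` the Taylor coefficients of `1/f'`, differentiating `F (f z) = z` gives
`F' = (1/f') ∘ F`, so the coefficients of `F = f⁻¹` obey the recursion
`(n+1) γ_{n+1} = ∑_{compositions c of n} φ_{|c|} ∏_i γ_{c_i}`, whose structure constants are
nonnegative. The same recursion governs `G = g⁻¹`, with the coefficients `1, 1-B, 1-B, …` of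
`1/g' = (1-Bz)/(1-z)` in place of `φ`. Writing `f' = (1+ω)/(1+Bω)` with `|ω| < 1`, the function
`1/f' = B + (1-B)/(1+ω)` has real part at least `(1+B)/2` on the disc, so Carathéodory's
coefficient bound gives `|φ_j| ≤ 1-B` for `j ≥ 1`, and `|γ_n| ≤ A_n` follows by induction
on `n`.
-/

open Real ComplexConjugate Filter Topology FormalMultilinearSeries

theorem circleAverage_conj (u : ℂ → ℂ) (c : ℂ) (R : ℝ) :
    circleAverage (fun z => conj (u z)) c R = conj (circleAverage u c R) := by
  simp only [circleAverage_def, ← conjLIE_apply, LinearIsometryEquiv.map_smul]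
  exact congrArg _
    (conjLIE.toLinearIsometry.intervalIntegral_comp_comm (μ := MeasureTheory.volume) _)

theorem norm_circleAverage_le (f : ℂ → ℂ) (c : ℂ) (R : ℝ) :
    ‖circleAverage f c R‖ ≤ circleAverage (fun z => ‖f z‖) c R := by
  simp only [circleAverage_def, norm_smul, smul_eq_mul, norm_inv, Real.norm_eq_abs,
    abs_of_pos two_pi_pos]
  gcongr
  exact intervalIntegral.norm_integral_le_integral_norm two_pi_pos.le

section Caratheodory

variable {u : ℂ → ℂ} {R : ℝ}

theorem circleAverage_inv_pow_mul (hu : DiffContOnCl ℂ u (ball 0 R)) (hR : 0 < R) (k : ℕ) :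
    circleAverage (fun z => (z ^ k)⁻¹ * u z) 0 R = iteratedDeriv k u 0 / k.factorial := by
  rw [circleAverage_eq_circleIntegral hR.ne']
  have := circleIntegral_one_div_sub_center_pow_smul_of_differentiable_on_off_countable hR k
    Set.countable_empty (closure_ball (0 : ℂ) hR.ne' ▸ hu.2)
    (fun z hz => hu.differentiableAt isOpen_ball hz.1)
  simp only [sub_zero, smul_eq_mul] at this ⊢
  rw [circleIntegral.integral_congr hR.le (g := fun z => 1 / z ^ (k + 1) * u z)
    (fun z _ => by simp only [pow_succ]; field_simp), this]
  field_simp [two_pi_I_ne_zero]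

theorem circleAverage_pow_mul (hu : DiffContOnCl ℂ u (ball 0 R)) (hR : 0 < R) {k : ℕ}
    (hk : k ≠ 0) : circleAverage (fun z => z ^ k * u z) 0 R = 0 := by
  have : DiffContOnCl ℂ (fun z => z ^ k * u z) (ball 0 |R|) :=
    (differentiable_id.pow k).diffContOnCl.smul (abs_of_pos hR ▸ hu)
  simpa [hk] using this.circleAverage

theorem circleAverage_inv_pow_mul_conj (hu : DiffContOnCl ℂ u (ball 0 R)) (hR : 0 < R) {k : ℕ}
    (hk : k ≠ 0) : circleAverage (fun z => (z ^ k)⁻¹ * conj (u z)) 0 R = 0 := by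
  have hsphere : Set.EqOn (fun z => (z ^ k)⁻¹ * conj (u z))
      (fun z => ((R : ℂ) ^ (2 * k))⁻¹ • conj (z ^ k * u z)) (sphere 0 |R|) := by
    intro z hz
    rw [abs_of_pos hR] at hz
    have hz0 : z ≠ 0 := ne_of_mem_sphere hz hR.ne'
    have hz0' : conj z ≠ 0 := (map_ne_zero _).2 hz0
    have hzR : z * conj z = (R : ℂ) ^ 2 := by
      rw [mul_conj, normSq_eq_norm_sq, mem_sphere_zero_iff_norm.1 hz]; push_cast; ring
    simp only [smul_eq_mul]
    rw [pow_mul, ← hzR, map_mul, map_pow]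
    field_simp
    ring
  rw [circleAverage_congr_sphere hsphere, circleAverage_fun_smul, circleAverage_conj,
    circleAverage_pow_mul hu hR hk, map_zero, smul_zero]

/-- The `k`-th coefficient is the circle average of `z⁻ᵏ (u + conj u) = z⁻ᵏ · 2 Re u`, since
`z⁻ᵏ conj u` averages to zero; this is at most `R⁻ᵏ` times the average of `2 Re u`. -/
theorem norm_iteratedDeriv_div_factorial_mul_pow_le (hu : DiffContOnCl ℂ u (ball 0 R))
    (hR : 0 < R) (hre : ∀ z ∈ sphere (0 : ℂ) R, 0 ≤ (u z).re) {k : ℕ} (hk : k ≠ 0) :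
    ‖iteratedDeriv k u 0 / k.factorial‖ * R ^ k ≤ 2 * (u 0).re := by
  have hcont : ContinuousOn u (sphere 0 R) :=
    hu.continuousOn.mono (closure_ball (0 : ℂ) hR.ne' ▸ sphere_subset_closedBall)
  have hinv : ContinuousOn (fun z : ℂ => (z ^ k)⁻¹) (sphere 0 R) :=
    (continuousOn_id.pow k).inv₀ fun z hz => pow_ne_zero k (ne_of_mem_sphere hz hR.ne')
  have hcoeff : iteratedDeriv k u 0 / k.factorial =
      circleAverage (fun z => (z ^ k)⁻¹ * ((2 * (u z).re : ℝ) : ℂ)) 0 R := by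
    have := circleAverage_fun_add (f₁ := fun z => (z ^ k)⁻¹ * u z)
      (f₂ := fun z => (z ^ k)⁻¹ * conj (u z)) ((hinv.mul hcont).circleIntegrable hR.le)
      ((hinv.mul (continuous_conj.comp_continuousOn hcont)).circleIntegrable hR.le)
    rw [circleAverage_inv_pow_mul hu hR, circleAverage_inv_pow_mul_conj hu hR hk,
      add_zero] at this
    rw [← this]
    congr 1 with z
    rw [← mul_add, add_conj]
  have hmean : circleAverage (fun z => (u z).re) 0 R = (u 0).re := by
    have hu' : DiffContOnCl ℂ u (ball 0 |R|) := by rwa [abs_of_pos hR]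
    rw [← hu'.circleAverage]
    exact reCLM.circleAverage_comp_comm (hcont.circleIntegrable hR.le)
  have hnorm : circleAverage (fun z => ‖(z ^ k)⁻¹ * ((2 * (u z).re : ℝ) : ℂ)‖) 0 R =
      (R ^ k)⁻¹ * (2 * (u 0).re) := by
    rw [← hmean, ← smul_eq_mul, ← smul_eq_mul, ← circleAverage_fun_smul,
      ← circleAverage_fun_smul]
    refine circleAverage_congr_sphere fun z hz => ?_
    rw [abs_of_pos hR] at hz
    simp [norm_inv, mem_sphere_zero_iff_norm.1 hz, abs_of_nonneg (hre z hz)]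
  rw [hcoeff, ← le_div_iff₀ (pow_pos hR k), div_eq_inv_mul, ← hnorm]
  exact norm_circleAverage_le _ _ _

theorem norm_iteratedDeriv_div_factorial_le_of_le_re (hu : DifferentiableOn ℂ u (ball 0 1))
    {c : ℝ} (hre : ∀ z ∈ ball (0 : ℂ) 1, c ≤ (u z).re) {k : ℕ} (hk : k ≠ 0) :
    ‖iteratedDeriv k u 0 / k.factorial‖ ≤ 2 * ((u 0).re - c) := by
  set T := iteratedDeriv k u 0 / k.factorial
  have hlim : Tendsto (fun R : ℝ => ‖T‖ * R ^ k) (𝓝[<] 1) (𝓝 ‖T‖) := by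
    have : Continuous fun R : ℝ => ‖T‖ * R ^ k := by fun_prop
    simpa using (this.tendsto 1).mono_left nhdsWithin_le_nhds
  refine le_of_tendsto hlim ?_
  filter_upwards [Ioo_mem_nhdsLT zero_lt_one] with R hR
  have hv : DiffContOnCl ℂ (fun z => -(c : ℂ) + u z) (ball 0 R) :=
    (hu.const_add _).diffContOnCl_ball (closedBall_subset_ball hR.2)
  have := norm_iteratedDeriv_div_factorial_mul_pow_le hv hR.1
    (fun z hz => by simpa using hre z (sphere_subset_closedBall.trans
      (closedBall_subset_ball hR.2) hz)) hk
  rwa [iteratedDeriv_const_add (Nat.pos_of_ne_zero hk), add_re, neg_re, ofReal_re,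
    neg_add_eq_sub] at this

end Caratheodory

theorem hasFPowerSeriesAt_ofScalars_of_hasSum {c : ℕ → ℂ} {F : ℂ → ℂ} {r : ℝ}
    (hr : 0 < r) (h : ∀ w : ℂ, ‖w‖ < r → HasSum (fun n => c n * w ^ n) (F w)) :
    HasFPowerSeriesAt F (ofScalars ℂ c) 0 := by
  refine ⟨ENNReal.ofReal r, ENNReal.le_of_forall_nnreal_lt fun t ht => ?_, by simpa, ?_⟩
  · have htr : (t : ℝ) < r := by
      rwa [ENNReal.lt_ofReal_iff_toReal_lt ENNReal.coe_ne_top, ENNReal.coe_toReal] at ht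
    refine le_radius_of_summable_norm _ ?_
    simpa using (h t (by simpa using htr)).summable.norm
  · intro y hy
    have hy' : ‖y‖ < r := by
      simpa [← ofReal_norm, ENNReal.ofReal_lt_ofReal_iff hr] using hy
    simpa [ofScalars_apply_eq, mul_comm] using h y hy'

section PowerSeries

variable {𝕜 : Type*} [NontriviallyNormedField 𝕜]

theorem HasFPowerSeriesAt.coeff_eq_iteratedDeriv_div [CompleteSpace 𝕜] [CharZero 𝕜]
    {f : 𝕜 → 𝕜} {p : FormalMultilinearSeries 𝕜 𝕜 𝕜} {x : 𝕜}
    (hp : HasFPowerSeriesAt f p x) (n : ℕ) : p.coeff n = iteratedDeriv n f x / n.factorial := by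
  rw [hp.eq_formalMultilinearSeries hp.analyticAt.hasFPowerSeriesAt, coeff_ofScalars]

theorem FormalMultilinearSeries.coeff_comp (q p : FormalMultilinearSeries 𝕜 𝕜 𝕜) (n : ℕ) :
    (q.comp p).coeff n =
      ∑ c : Composition n, q.coeff c.length * ∏ i, p.coeff (c.blocksFun i) := by
  rw [coeff, FormalMultilinearSeries.comp, _root_.sum_apply]
  refine Finset.sum_congr rfl fun c _ => ?_
  rw [compAlongComposition_apply, apply_eq_prod_smul_coeff, smul_eq_mul, mul_comm]
  congr 1

def compCoeff {R : Type*} [CommSemiring R] (φ γ : ℕ → R) (n : ℕ) : R :=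
  ∑ c : Composition n, φ c.length * ∏ i, γ (c.blocksFun i)

theorem coeff_comp_ofScalars (φ γ : ℕ → 𝕜) (n : ℕ) :
    ((ofScalars 𝕜 φ).comp (ofScalars 𝕜 γ)).coeff n = compCoeff φ γ n := by
  simp [coeff_comp, coeff_ofScalars, compCoeff]

end PowerSeries

@[norm_cast]
theorem ofReal_compCoeff (φ γ : ℕ → ℝ) (n : ℕ) :
    ((compCoeff φ γ n : ℝ) : ℂ) = compCoeff (fun j => (φ j : ℂ)) (fun j => (γ j : ℂ)) n := by
  simp [compCoeff]

theorem norm_compCoeff_le {𝕜 : Type*} [NormedField 𝕜] {φ γ : ℕ → 𝕜} {ψ a : ℕ → ℝ}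
    (hφ : ∀ j, ‖φ j‖ ≤ ψ j) (hψ : ∀ j, 0 ≤ ψ j) {n : ℕ} (hγ : ∀ j ≤ n, ‖γ j‖ ≤ a j) :
    ‖compCoeff φ γ n‖ ≤ compCoeff ψ a n := by
  refine (norm_sum_le _ _).trans (Finset.sum_le_sum fun c _ => ?_)
  rw [norm_mul, norm_prod]
  exact mul_le_mul (hφ _) (Finset.prod_le_prod (fun _ _ => norm_nonneg _)
    fun i _ => hγ _ (c.blocksFun_le i)) (by positivity) (hψ _)

theorem norm_le_of_compCoeff_recurrence {𝕜 : Type*} [RCLike 𝕜] {φ γ : ℕ → 𝕜}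
    {ψ a : ℕ → ℝ} (hφ : ∀ j, ‖φ j‖ ≤ ψ j) (hψ : ∀ j, 0 ≤ ψ j) (h0 : ‖γ 0‖ ≤ a 0)
    (hγ : ∀ n, (n + 1) * γ (n + 1) = compCoeff φ γ n)
    (ha : ∀ n, (n + 1) * a (n + 1) = compCoeff ψ a n) (n : ℕ) : ‖γ n‖ ≤ a n := by
  induction n using Nat.strong_induction_on with
  | _ n ih =>
    cases n with
    | zero => exact h0
    | succ n =>
      have := norm_compCoeff_le hφ hψ fun j hj => ih j (Nat.lt_succ_of_le hj)
      rw [← hγ, ← ha, norm_mul, ← Nat.cast_succ, RCLike.norm_natCast, Nat.cast_succ] at this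
      exact le_of_mul_le_mul_left this n.cast_add_one_pos

section InverseSeries

variable {𝕜 : Type*} [NontriviallyNormedField 𝕜] [CompleteSpace 𝕜] {f F : 𝕜 → 𝕜}

theorem deriv_eventuallyEq_inv_deriv_comp_of_leftInverse (hf : AnalyticAt 𝕜 f 0)
    (hf0 : f 0 = 0) (hf' : deriv f 0 ≠ 0) (hF : AnalyticAt 𝕜 F 0)
    (hFf : ∀ᶠ z in 𝓝 0, F (f z) = z) :
    deriv F =ᶠ[𝓝 0] fun w => (deriv f (F w))⁻¹ := by
  have hF0 : F 0 = 0 := by simpa [hf0] using hFf.self_of_nhds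
  have hE := hf.hasStrictDerivAt.hasStrictFDerivAt_equiv hf'
  have hfF : ∀ᶠ w in 𝓝 0, f (F w) = w := by
    have hleft := hE.localInverse_unique hFf
    have hright := hE.eventually_right_inverse
    rw [hf0] at hleft hright
    filter_upwards [hleft, hright] with w h1 h2
    rw [h1, h2]
  have hgood : ∀ᶠ z in 𝓝 (F 0), AnalyticAt 𝕜 f z ∧ deriv f z ≠ 0 := by
    rw [hF0]
    exact hf.eventually_analyticAt.and (hf.deriv.continuousAt.eventually_ne hf')
  filter_upwards [hfF.eventually_nhds, hF.eventually_analyticAt, hF.continuousAt.eventually hgood]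
    with w hfFw hFw hfw
  exact (HasDerivAt.of_local_left_inverse hFw.continuousAt hfw.1.differentiableAt.hasDerivAt
    hfw.2 hfFw).deriv

theorem inverse_coeff_recurrence_s8 [CharZero 𝕜] {c φ : ℕ → 𝕜} (hf : AnalyticAt 𝕜 f 0)
    (hf0 : f 0 = 0) (hf' : deriv f 0 ≠ 0) (hFf : ∀ᶠ z in 𝓝 0, F (f z) = z)
    (hF : HasFPowerSeriesAt F (ofScalars 𝕜 c) 0)
    (hφ : HasFPowerSeriesAt (fun z => (deriv f z)⁻¹) (ofScalars 𝕜 φ) 0) (n : ℕ) :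
    (n + 1) * c (n + 1) = compCoeff φ c n := by
  have hF0 : F 0 = 0 := by simpa [hf0] using hFf.self_of_nhds
  have hD : HasFPowerSeriesAt (deriv F) ((ofScalars 𝕜 φ).comp (ofScalars 𝕜 c)) 0 :=
    ((hF0 ▸ hφ).comp hF).congr
      (deriv_eventuallyEq_inv_deriv_comp_of_leftInverse hf hf0 hf' hF.analyticAt hFf).symm
  calc (n + 1) * c (n + 1) = (n + 1) * (iteratedDeriv (n + 1) F 0 / (n + 1).factorial) := by
        rw [← hF.coeff_eq_iteratedDeriv_div, coeff_ofScalars]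
    _ = iteratedDeriv n (deriv F) 0 / n.factorial := by
        rw [iteratedDeriv_succ', Nat.factorial_succ]
        push_cast
        field_simp
    _ = compCoeff φ c n := by rw [← hD.coeff_eq_iteratedDeriv_div, coeff_comp_ofScalars]

end InverseSeries

theorem one_add_ne_zero_of_norm_lt_one {w : ℂ} (hw : ‖w‖ < 1) : 1 + w ≠ 0 := fun h => by
  simp [eq_neg_of_add_eq_zero_right h] at hw

theorem half_lt_re_inv_one_add {w : ℂ} (hw : ‖w‖ < 1) : 1 / 2 < ((1 + w)⁻¹).re := by
  have hpos : 0 < normSq (1 + w) := normSq_pos.2 (one_add_ne_zero_of_norm_lt_one hw)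
  have hw2 : normSq w < 1 := by rw [normSq_eq_norm_sq]; nlinarith [norm_nonneg w]
  rw [inv_re, lt_div_iff₀ hpos]
  simp only [normSq_apply, add_re, add_im, one_re, one_im, zero_add] at hpos hw2 ⊢
  nlinarith

theorem le_re_div_one_add {B : ℝ} (hB : B ≤ 1) {w : ℂ} (hw : ‖w‖ < 1) :
    (1 + B) / 2 ≤ ((1 + B * w) / (1 + w)).re := by
  have hw1 := one_add_ne_zero_of_norm_lt_one hw
  have : (1 + B * w) / (1 + w) = B + ((1 - B : ℝ) : ℂ) * (1 + w)⁻¹ := by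
    push_cast; field_simp; ring
  rw [this, add_re, ofReal_re, re_ofReal_mul]
  nlinarith [half_lt_re_inv_one_add hw]

def extremalCoeff (B : ℝ) (j : ℕ) : ℝ := if j = 0 then 1 else 1 - B

theorem extremalCoeff_nonneg {B : ℝ} (hB : B ≤ 1) (j : ℕ) : 0 ≤ extremalCoeff B j := by
  unfold extremalCoeff; split_ifs <;> linarith

theorem hasSum_extremalCoeff (B : ℝ) {w : ℂ} (hw : ‖w‖ < 1) :
    HasSum (fun j => (extremalCoeff B j : ℂ) * w ^ j) ((1 - B * w) / (1 - w)) := by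
  have hw1 : 1 - w ≠ 0 := sub_ne_zero.2 fun h => by simp [← h] at hw
  have hcoeff : (fun j => (extremalCoeff B j : ℂ) * w ^ j) =
      fun j => (1 - (B : ℂ)) * w ^ j + if j = 0 then (B : ℂ) else 0 := by
    funext j
    rcases eq_or_ne j 0 with rfl | hj <;> simp [extremalCoeff, *]
  rw [hcoeff, show (1 - B * w) / (1 - w) = (1 - B) * (1 - w)⁻¹ + B by field_simp; ring]
  exact ((hasSum_geometric_of_norm_lt_one hw).mul_left _).add (hasSum_ite_eq 0 _)

theorem hasFPowerSeriesAt_inv_deriv_of_deriv_eq {B : ℝ} {g : ℂ → ℂ}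
    (hg' : ∀ z ∈ ball (0 : ℂ) 1, deriv g z = (1 - z) / (1 - (B : ℂ) * z)) :
    HasFPowerSeriesAt (fun z => (deriv g z)⁻¹)
      (ofScalars ℂ fun j => (extremalCoeff B j : ℂ)) 0 :=
  (hasFPowerSeriesAt_ofScalars_of_hasSum one_pos fun _ hw => hasSum_extremalCoeff B hw).congr
    (by filter_upwards [ball_mem_nhds (0 : ℂ) one_pos] with z hz; rw [hg' z hz, inv_div])

namespace MemP

variable {B : ℝ} {p : ℂ → ℂ}

theorem ne_zero (hp : MemP 1 B p) (hB₁ : -1 ≤ B) (hB₂ : B ≤ 1) {z : ℂ}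
    (hz : z ∈ ball (0 : ℂ) 1) : p z ≠ 0 := by
  obtain ⟨-, -, w, -, -, hw, hpw⟩ := hp
  have hBw : ‖(B : ℂ) * w z‖ < 1 := by
    rw [norm_mul, norm_real, Real.norm_eq_abs]
    exact (mul_le_of_le_one_left (norm_nonneg _) (abs_le.2 ⟨hB₁, hB₂⟩)).trans_lt (hw z hz)
  rw [hpw z hz, ofReal_one, one_mul]
  exact div_ne_zero (one_add_ne_zero_of_norm_lt_one (hw z hz))
    (one_add_ne_zero_of_norm_lt_one hBw)

theorem analyticOnNhd_inv (hp : MemP 1 B p) (hB₁ : -1 ≤ B) (hB₂ : B ≤ 1) :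
    AnalyticOnNhd ℂ (fun z => (p z)⁻¹) (ball 0 1) :=
  hp.1.inv fun _ hz => hp.ne_zero hB₁ hB₂ hz

theorem le_re_inv (hp : MemP 1 B p) (hB : B ≤ 1) {z : ℂ} (hz : z ∈ ball (0 : ℂ) 1) :
    (1 + B) / 2 ≤ ((p z)⁻¹).re := by
  obtain ⟨-, -, w, -, -, hw, hpw⟩ := hp
  rw [hpw z hz, ofReal_one, one_mul, inv_div]
  exact le_re_div_one_add hB (hw z hz)

theorem norm_iteratedDeriv_inv_div_factorial_le (hp : MemP 1 B p)
    (hB₁ : -1 ≤ B) (hB₂ : B ≤ 1) (j : ℕ) :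
    ‖iteratedDeriv j (fun z => (p z)⁻¹) 0 / j.factorial‖ ≤ extremalCoeff B j := by
  rcases eq_or_ne j 0 with rfl | hj
  · simp [extremalCoeff, hp.2.1]
  · convert norm_iteratedDeriv_div_factorial_le_of_le_re
      (hp.analyticOnNhd_inv hB₁ hB₂).differentiableOn
      (fun z hz => hp.le_re_inv hB₂ hz) hj using 1
    simp [extremalCoeff, hj, hp.2.1]
    ring

end MemP

theorem inverse_coeff_domination_I_general (B : ℝ) (hB₁ : -1 ≤ B) (hB₂ : B < 1)
    (f : ℂ → ℂ) (hf : MemI 1 B f)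
    (g : ℂ → ℂ) (hg : AnalyticOnNhd ℂ g (ball (0 : ℂ) 1)) (hg0 : g 0 = 0)
    (hg' : ∀ z ∈ ball (0 : ℂ) 1, deriv g z = (1 - z) / (1 - (B : ℂ) * z))
    (F : ℂ → ℂ) (hFf : ∀ᶠ z in nhds (0 : ℂ), F (f z) = z)
    (γ : ℕ → ℂ) (hγ0 : γ 0 = 0)
    (hF : ∃ r > 0, ∀ w : ℂ, ‖w‖ < r → HasSum (fun n : ℕ => γ n * w ^ n) (F w))
    (G : ℂ → ℂ) (hGg : ∀ᶠ z in nhds (0 : ℂ), G (g z) = z)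
    (a : ℕ → ℝ) (ha0 : a 0 = 0)
    (hG : ∃ r > 0, ∀ w : ℂ, ‖w‖ < r → HasSum (fun n : ℕ => (a n : ℂ) * w ^ n) (G w))
    (n : ℕ) :
    ‖γ n‖ ≤ a n := by
  obtain ⟨hfa, -, hf0, hf'0, hP⟩ := hf
  obtain ⟨r, hr, hF⟩ := hF
  obtain ⟨s, hs, hG⟩ := hG
  have h0 : (0 : ℂ) ∈ ball (0 : ℂ) 1 := mem_ball_self one_pos
  have hΦ := (hP.analyticOnNhd_inv hB₁ hB₂.le 0 h0).hasFPowerSeriesAt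
  have hγ := inverse_coeff_recurrence_s8 (hfa 0 h0) hf0 (by simp [hf'0]) hFf
    (hasFPowerSeriesAt_ofScalars_of_hasSum hr hF) hΦ
  have ha := inverse_coeff_recurrence_s8 (hg 0 h0) hg0 (by simp [hg' 0 h0]) hGg
    (hasFPowerSeriesAt_ofScalars_of_hasSum hs hG) (hasFPowerSeriesAt_inv_deriv_of_deriv_eq hg')
  refine norm_le_of_compCoeff_recurrence (hP.norm_iteratedDeriv_inv_div_factorial_le hB₁ hB₂.le)
    (extremalCoeff_nonneg hB₂.le) (by simp [hγ0, ha0]) hγ (fun m => ?_) n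
  exact_mod_cast ha m

/-- Inverse coefficient domination for `𝔦[1,B]`, `-1 ≤ B < 1`: with `g` the normalized
primitive of `(1-z)/(1-Bz)` on the disc, `f⁻¹(w) = w + ∑_{n≥2} γ_n wⁿ` and
`g⁻¹(w) = w + ∑_{n≥2} A_n wⁿ`, one has `|γ_n| ≤ A_n` for every `n ≥ 2`. -/
theorem inverse_coeff_domination_I (B : ℝ) (hB₁ : -1 ≤ B) (hB₂ : B < 1)
    (f : ℂ → ℂ) (hf : MemI 1 B f)
    (g : ℂ → ℂ) (hg : AnalyticOnNhd ℂ g (ball (0 : ℂ) 1)) (hg0 : g 0 = 0)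
    (hg' : ∀ z ∈ ball (0 : ℂ) 1, deriv g z = (1 - z) / (1 - (B : ℂ) * z))
    (F : ℂ → ℂ) (hFf : ∀ᶠ z in nhds (0 : ℂ), F (f z) = z)
    (γ : ℕ → ℂ) (hγ0 : γ 0 = 0) (hγ1 : γ 1 = 1)
    (hF : ∃ r > 0, ∀ w : ℂ, ‖w‖ < r → HasSum (fun n : ℕ => γ n * w ^ n) (F w))
    (G : ℂ → ℂ) (hGg : ∀ᶠ z in nhds (0 : ℂ), G (g z) = z)
    (a : ℕ → ℝ) (ha0 : a 0 = 0) (ha1 : a 1 = 1)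
    (hG : ∃ r > 0, ∀ w : ℂ, ‖w‖ < r → HasSum (fun n : ℕ => (a n : ℂ) * w ^ n) (G w))
    (n : ℕ) (hn : 2 ≤ n) :
    ‖γ n‖ ≤ a n :=
  inverse_coeff_domination_I_general B hB₁ hB₂ f hf g hg hg0 hg' F hFf γ hγ0 hF G hGg a ha0 hG n
end
end

section
/- Let -1 \le B < 1 and let g be the analytic function on \mathbb{D} with g(0) = 0 and g'(z) = (1-z)/(1-Bz), and let g^{-1}(w) = w + \sum_{n=2}^{\infty} A_n w^n be its analytic inverse near 0. Then A_n > 0 for all n \ge 2; moreover 2A_2 = 1 - B, 3A_3 = (1 - B + 2)A_2, and for n > 2, (n+1)A_{n+1} = (1 - B + n)A_n + \sum_{k=1}^{n-2} (k+1) A_{k+1} A_{n-k}. -/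
open Complex Metric Finset

/-!
Since `g'(0) = 1`, the inverse function theorem makes `G` a two-sided inverse of `g` near `0`,
so differentiating `g (G w) = w` gives `G' · (1 - G) / (1 - B G) = 1`, i.e.
`G' = 1 - B G + G' G`. Comparing coefficients of `wⁿ` (a Cauchy product) yields
`(n+1) A_{n+1} = δ_{n0} - B A_n + ∑_{k ≤ n} (k+1) A_{k+1} A_{n-k}`. From `A_0 = G 0 = 0` this
gives `A_1 = 1` and `2 A_2 = 1 - B`, and for `n ≥ 2` the terms `k = 0, n-1, n` of the sum
contribute `A_n + n A_n + 0`, which is the stated recurrence. All its terms are positive once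
`A_2 = (1 - B)/2 > 0`, so positivity follows by strong induction.
-/

open Filter Topology FormalMultilinearSeries

theorem HasStrictFDerivAt.eventually_right_inverse_of_left_inverse {𝕜 E F : Type*}
    [NontriviallyNormedField 𝕜] [NormedAddCommGroup E] [NormedSpace 𝕜 E] [CompleteSpace E]
    [NormedAddCommGroup F] [NormedSpace 𝕜 F] {f : E → F} {f' : E ≃L[𝕜] F} {a : E} {g : F → E}
    (hf : HasStrictFDerivAt f (f' : E →L[𝕜] F) a) (hg : ∀ᶠ x in 𝓝 a, g (f x) = x) :
    ∀ᶠ y in 𝓝 (f a), f (g y) = y := by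
  filter_upwards [hf.localInverse_unique hg, hf.eventually_right_inverse] with y h1 h2
  rw [h1, h2]

section ScalarPowerSeries

variable {𝕜 : Type*} [NontriviallyNormedField 𝕜] {c d : ℕ → 𝕜} {f g : 𝕜 → 𝕜}

theorem hasFPowerSeriesAt_ofScalars_iff :
    HasFPowerSeriesAt f (ofScalars 𝕜 c) 0 ↔ ∀ᶠ z in 𝓝 0, HasSum (fun n => c n * z ^ n) (f z) := by
  simp only [hasFPowerSeriesAt_iff, coeff_ofScalars, smul_eq_mul, mul_comm, zero_add]

theorem HasFPowerSeriesAt.ofScalars_coeff_zero (h : HasFPowerSeriesAt f (ofScalars 𝕜 c) 0) :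
    c 0 = f 0 := by
  simpa using h.coeff_zero (fun _ => 1)

theorem HasFPowerSeriesAt.eventually_summable_norm_ofScalars
    (h : HasFPowerSeriesAt f (ofScalars 𝕜 c) 0) :
    ∀ᶠ z in 𝓝 0, Summable fun n => ‖c n * z ^ n‖ := by
  filter_upwards [eball_mem_nhds (0 : 𝕜) h.radius_pos] with z hz
  have := (ofScalars 𝕜 c).summable_norm_mul_pow (by simpa [enorm_eq_nnnorm] using hz)
  simpa [ofScalars_norm, norm_mul, norm_pow] using this

theorem HasFPowerSeriesAt.deriv_ofScalars [CompleteSpace 𝕜]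
    (h : HasFPowerSeriesAt f (ofScalars 𝕜 c) 0) :
    HasFPowerSeriesAt (deriv f) (ofScalars 𝕜 fun n => (n + 1) * c (n + 1)) 0 := by
  obtain ⟨r, hr⟩ := h
  have hd := ((ContinuousLinearMap.apply 𝕜 𝕜 (1 : 𝕜)).comp_hasFPowerSeriesOnBall
    hr.fderiv).hasFPowerSeriesAt
  rw [hasFPowerSeriesAt_iff] at hd
  rw [hasFPowerSeriesAt_ofScalars_iff]
  filter_upwards [hd] with z hz
  rw [zero_add, Function.comp_apply, ContinuousLinearMap.apply_apply,
    fderiv_apply_one_eq_deriv] at hz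
  refine hz.congr_fun fun n => ?_
  have : ((ContinuousLinearMap.apply 𝕜 𝕜 (1 : 𝕜)).compFormalMultilinearSeries
      (ofScalars 𝕜 c).derivSeries).coeff n = (ofScalars 𝕜 c).derivSeries.coeff n 1 := rfl
  rw [this, derivSeries_coeff_one, coeff_ofScalars, nsmul_eq_mul, smul_eq_mul]
  push_cast
  ring

theorem HasFPowerSeriesAt.mul_ofScalars [CompleteSpace 𝕜]
    (hf : HasFPowerSeriesAt f (ofScalars 𝕜 c) 0) (hg : HasFPowerSeriesAt g (ofScalars 𝕜 d) 0) :
    HasFPowerSeriesAt (f * g)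
      (ofScalars 𝕜 fun n => ∑ k ∈ range (n + 1), c k * d (n - k)) 0 := by
  rw [hasFPowerSeriesAt_ofScalars_iff]
  filter_upwards [hasFPowerSeriesAt_ofScalars_iff.1 hf, hasFPowerSeriesAt_ofScalars_iff.1 hg,
    hf.eventually_summable_norm_ofScalars, hg.eventually_summable_norm_ofScalars]
    with z hfz hgz hcz hdz
  have := hasSum_sum_range_mul_of_summable_norm hcz hdz
  rw [hfz.tsum_eq, hgz.tsum_eq] at this
  refine this.congr_fun fun n => ?_
  rw [Finset.sum_mul]
  refine Finset.sum_congr rfl fun k hk => ?_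
  rw [mul_mul_mul_comm, ← pow_add, Nat.add_sub_cancel' (Finset.mem_range_succ_iff.1 hk)]

theorem HasFPowerSeriesAt.coeff_recurrence_of_deriv_eq [CompleteSpace 𝕜] (B : 𝕜)
    {G : 𝕜 → 𝕜}
    (hG : HasFPowerSeriesAt G (ofScalars 𝕜 c) 0)
    (hode : ∀ᶠ w in 𝓝 0, deriv G w = 1 - B * G w + deriv G w * G w) (n : ℕ) :
    (n + 1) * c (n + 1) = (if n = 0 then 1 else 0) - B * c n +
      ∑ k ∈ range (n + 1), (k + 1) * c (k + 1) * c (n - k) := by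
  have hG' := hG.deriv_ofScalars
  have hR : HasFPowerSeriesAt (fun w => 1 - B * G w + deriv G w * G w) (ofScalars 𝕜 fun n =>
      (if n = 0 then 1 else 0) - B * c n +
        ∑ k ∈ range (n + 1), (k + 1) * c (k + 1) * c (n - k)) 0 := by
    rw [hasFPowerSeriesAt_ofScalars_iff]
    filter_upwards [hasFPowerSeriesAt_ofScalars_iff.1 hG,
      hasFPowerSeriesAt_ofScalars_iff.1 (hG'.mul_ofScalars hG)] with w hGw hprod
    refine (((hasSum_ite_eq 0 (1 : 𝕜)).sub (hGw.mul_left B)).add hprod).congr_fun fun n => ?_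
    split_ifs with hn
    · subst hn; simp
    · ring
  have := hG'.eq_formalMultilinearSeries_of_eventually hR hode
  exact congrFun ((ofScalars_series_eq_iff _ _ _).1 this) n

end ScalarPowerSeries

section LeftInverse

variable {𝕜 : Type*} [NontriviallyNormedField 𝕜] [CompleteSpace 𝕜]

theorem AnalyticAt.eventually_deriv_mul_deriv_left_inverse {g G : 𝕜 → 𝕜} {a : 𝕜}
    (hg : AnalyticAt 𝕜 g a) (hg' : deriv g a ≠ 0) (hG : AnalyticAt 𝕜 G (g a))
    (hGg : ∀ᶠ z in 𝓝 a, G (g z) = z) :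
    ∀ᶠ w in 𝓝 (g a), deriv g (G w) * deriv G w = 1 := by
  have hgG := (hg.hasStrictDerivAt.hasStrictFDerivAt_equiv hg')
    |>.eventually_right_inverse_of_left_inverse hGg
  have hGa : G (g a) = a := hGg.self_of_nhds
  have hGt : Tendsto G (𝓝 (g a)) (𝓝 a) := by
    simpa only [hGa] using hG.continuousAt.tendsto
  filter_upwards [eventually_eventually_nhds.2 hgG, hGt.eventually hg.eventually_analyticAt,
    hG.eventually_analyticAt] with w hgG_w hg_w hG_w
  have hcomp : g ∘ G =ᶠ[𝓝 w] id := hgG_w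
  rw [← deriv_comp w hg_w.differentiableAt hG_w.differentiableAt, hcomp.deriv_eq, deriv_id]

theorem eventually_deriv_eq_of_left_inverse (B : 𝕜) {g G : 𝕜 → 𝕜} (hg : AnalyticAt 𝕜 g 0)
    (hg0 : g 0 = 0) (hg' : ∀ᶠ z in 𝓝 0, deriv g z = (1 - z) / (1 - B * z))
    (hG : AnalyticAt 𝕜 G 0) (hGg : ∀ᶠ z in 𝓝 0, G (g z) = z) :
    ∀ᶠ w in 𝓝 0, deriv G w = 1 - B * G w + deriv G w * G w := by
  have hg'0 : deriv g 0 = 1 := by simpa using hg'.self_of_nhds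
  have hinv := hg.eventually_deriv_mul_deriv_left_inverse (by simp [hg'0]) (by rwa [hg0]) hGg
  have hG0 : G 0 = 0 := by simpa [hg0] using hGg.self_of_nhds
  rw [hg0] at hinv
  have hGt : Tendsto G (𝓝 0) (𝓝 0) := by simpa only [hG0] using hG.continuousAt.tendsto
  have hden : ∀ᶠ z in 𝓝 (0 : 𝕜), 1 - B * z ≠ 0 :=
    (continuousAt_const.sub (continuousAt_const.mul continuousAt_id)).eventually_ne (by simp)
  filter_upwards [hinv, hGt.eventually hg', hGt.eventually hden] with w hw hg'w hden_w
  rw [hg'w, div_mul_eq_mul_div, div_eq_one_iff_eq hden_w] at hw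
  linear_combination hw

end LeftInverse

section Recurrence

variable {a : ℕ → ℝ} {B : ℝ}

theorem recurrence_initial_terms (ha0 : a 0 = 0)
    (hrec : ∀ n : ℕ, ((n : ℝ) + 1) * a (n + 1) = (if n = 0 then 1 else 0) - B * a n +
      ∑ k ∈ range (n + 1), ((k : ℝ) + 1) * a (k + 1) * a (n - k)) :
    a 1 = 1 ∧ 2 * a 2 = 1 - B := by
  have ha1 : a 1 = 1 := by simpa [ha0] using hrec 0
  refine ⟨ha1, ?_⟩
  have h := hrec 1
  simp only [sum_range_succ] at h
  norm_num [ha0, ha1] at h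
  linarith

theorem recurrence_of_two_le (ha0 : a 0 = 0) (ha1 : a 1 = 1)
    (hrec : ∀ n : ℕ, ((n : ℝ) + 1) * a (n + 1) = (if n = 0 then 1 else 0) - B * a n +
      ∑ k ∈ range (n + 1), ((k : ℝ) + 1) * a (k + 1) * a (n - k))
    {n : ℕ} (hn : 2 ≤ n) :
    ((n : ℝ) + 1) * a (n + 1) = (1 - B + (n : ℝ)) * a n +
      ∑ k ∈ Icc 1 (n - 2), ((k : ℝ) + 1) * a (k + 1) * a (n - k) := by
  obtain ⟨m, rfl⟩ : ∃ m, n = m + 2 := ⟨n - 2, by omega⟩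
  have hIcc : ∑ k ∈ Icc 1 m, ((k : ℝ) + 1) * a (k + 1) * a (m + 2 - k) =
      ∑ k ∈ range m, ((k + 1 : ℕ) + 1) * a (k + 1 + 1) * a (m + 2 - (k + 1)) := by
    rw [← Ico_add_one_right_eq_Icc, sum_Ico_eq_sum_range]
    simp [add_comm]
  rw [hrec, sum_range_succ, sum_range_succ, sum_range_succ', Nat.add_sub_cancel, hIcc]
  rw [if_neg (by omega), show m + 2 - (m + 1) = 1 by omega, Nat.sub_self, Nat.sub_zero, zero_add,
    ha0, ha1]
  push_cast
  ring

theorem pos_of_recurrence (hB : B < 1) (ha2 : 2 * a 2 = 1 - B)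
    (hrec : ∀ n : ℕ, 2 ≤ n → ((n : ℝ) + 1) * a (n + 1) = (1 - B + (n : ℝ)) * a n +
      ∑ k ∈ Icc 1 (n - 2), ((k : ℝ) + 1) * a (k + 1) * a (n - k))
    (n : ℕ) (hn : 2 ≤ n) : 0 < a n := by
  induction n using Nat.strong_induction_on with
  | _ n ih =>
    rcases hn.eq_or_lt with rfl | hlt
    · linarith
    obtain ⟨m, rfl⟩ : ∃ m, n = m + 1 := ⟨n - 1, by omega⟩
    have ham : 0 < a m := ih m (by omega) (by omega)
    have hsum : 0 ≤ ∑ k ∈ Icc 1 (m - 2), ((k : ℝ) + 1) * a (k + 1) * a (m - k) := by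
      refine sum_nonneg fun k hk => ?_
      have hk' := mem_Icc.1 hk
      have := ih (k + 1) (by omega) (by omega)
      have := ih (m - k) (by omega) (by omega)
      positivity
    have hcoef : 0 < 1 - B + (m : ℝ) := by linarith [(Nat.cast_nonneg m : (0 : ℝ) ≤ m)]
    have : 0 < ((m : ℝ) + 1) * a (m + 1) := by
      rw [hrec m (by omega)]
      exact add_pos_of_pos_of_nonneg (mul_pos hcoef ham) hsum
    exact pos_of_mul_pos_right this (by positivity)

end Recurrence

theorem inverse_coeff_recurrence_general (B : ℝ) (hB₂ : B < 1)
    (g : ℂ → ℂ) (hg : AnalyticOnNhd ℂ g (ball (0 : ℂ) 1)) (hg0 : g 0 = 0)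
    (hg' : ∀ z ∈ ball (0 : ℂ) 1, deriv g z = (1 - z) / (1 - (B : ℂ) * z))
    (G : ℂ → ℂ) (hGg : ∀ᶠ z in nhds (0 : ℂ), G (g z) = z)
    (a : ℕ → ℝ)
    (hG : ∃ r > 0, ∀ w : ℂ, ‖w‖ < r → HasSum (fun n : ℕ => (a n : ℂ) * w ^ n) (G w)) :
    (∀ n : ℕ, 2 ≤ n → 0 < a n) ∧
      2 * a 2 = 1 - B ∧
      3 * a 3 = (1 - B + 2) * a 2 ∧
      ∀ n : ℕ, 2 < n →
        ((n : ℝ) + 1) * a (n + 1) = (1 - B + (n : ℝ)) * a n +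
          ∑ k ∈ Finset.Icc 1 (n - 2), ((k : ℝ) + 1) * a (k + 1) * a (n - k) := by
  obtain ⟨r, hr, hGsum⟩ := hG
  have hGser : HasFPowerSeriesAt G (ofScalars ℂ fun n => (a n : ℂ)) 0 :=
    hasFPowerSeriesAt_ofScalars_iff.2 <| eventually_of_mem (ball_mem_nhds 0 hr)
      fun w hw => hGsum w (mem_ball_zero_iff.1 hw)
  have hode := eventually_deriv_eq_of_left_inverse (B : ℂ) (hg 0 (mem_ball_self one_pos)) hg0
    (eventually_of_mem (ball_mem_nhds 0 one_pos) hg') hGser.analyticAt hGg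
  have hrec : ∀ n : ℕ, ((n : ℝ) + 1) * a (n + 1) = (if n = 0 then 1 else 0) - B * a n +
      ∑ k ∈ range (n + 1), ((k : ℝ) + 1) * a (k + 1) * a (n - k) := fun n => by
    have h := hGser.coeff_recurrence_of_deriv_eq (B : ℂ) hode n
    rw [← Complex.ofReal_inj]
    push_cast [apply_ite]
    simpa using h
  have hG0 : G 0 = 0 := by simpa [hg0] using hGg.self_of_nhds
  have ha0 : a 0 = 0 := by exact_mod_cast hGser.ofScalars_coeff_zero.trans hG0
  obtain ⟨ha1, ha2⟩ := recurrence_initial_terms ha0 hrec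
  have hrec₂ := fun n (hn : 2 ≤ n) => recurrence_of_two_le ha0 ha1 hrec hn
  have ha3 : 3 * a 3 = (1 - B + 2) * a 2 := by
    have := hrec₂ 2 le_rfl
    norm_num at this
    linarith
  exact ⟨pos_of_recurrence hB₂ ha2 hrec₂, ha2, ha3, fun n hn => hrec₂ n hn.le⟩

/-- Positivity and recurrence for the inverse coefficients of the normalized primitive
`g` of `(1-z)/(1-Bz)` on the unit disc, `-1 ≤ B < 1`: writing
`g⁻¹(w) = w + ∑_{n≥2} A_n wⁿ`, one has `A_n > 0` for all `n ≥ 2`, `2A₂ = 1-B`,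
`3A₃ = (1-B+2)A₂`, and `(n+1)A_{n+1} = (1-B+n)A_n + ∑_{k=1}^{n-2}(k+1)A_{k+1}A_{n-k}`
for `n > 2`. -/
theorem inverse_coeff_recurrence (B : ℝ) (hB₁ : -1 ≤ B) (hB₂ : B < 1)
    (g : ℂ → ℂ) (hg : AnalyticOnNhd ℂ g (ball (0 : ℂ) 1)) (hg0 : g 0 = 0)
    (hg' : ∀ z ∈ ball (0 : ℂ) 1, deriv g z = (1 - z) / (1 - (B : ℂ) * z))
    (G : ℂ → ℂ) (hGg : ∀ᶠ z in nhds (0 : ℂ), G (g z) = z)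
    (a : ℕ → ℝ) (ha0 : a 0 = 0) (ha1 : a 1 = 1)
    (hG : ∃ r > 0, ∀ w : ℂ, ‖w‖ < r → HasSum (fun n : ℕ => (a n : ℂ) * w ^ n) (G w)) :
    (∀ n : ℕ, 2 ≤ n → 0 < a n) ∧
      2 * a 2 = 1 - B ∧
      3 * a 3 = (1 - B + 2) * a 2 ∧
      ∀ n : ℕ, 2 < n →
        ((n : ℝ) + 1) * a (n + 1) = (1 - B + (n : ℝ)) * a n +
          ∑ k ∈ Finset.Icc 1 (n - 2), ((k : ℝ) + 1) * a (k + 1) * a (n - k) :=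
  inverse_coeff_recurrence_general B hB₂ g hg hg0 hg' G hGg a hG
end

section
/- Let A > 0 and let f(z) = z e^{Az}. Then the analytic inverse F = f^{-1} of f in a neighbourhood of the origin has Taylor expansion F(w) = w + \sum_{n=2}^{\infty} \gamma_n w^n with \gamma_n = (-1)^{n-1} n^{n-2} A^{n-1}/(n-1)! for all n \ge 2; in particular |\gamma_n| = (1/n) \prod_{m=0}^{n-2} (nA/(m+1)), so the bound of the inverse coefficient estimate for S^*[A,0] is attained. -/
/-
Comparing coefficients of `z ^ n` in `F (f z) = z`, where
`f z ^ k = z ^ k * exp (k * A * z) = ∑ m ≥ k, (k * A) ^ (m - k) / (m - k)! * z ^ m`,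
gives a unitriangular linear system for the `γ k`. The coefficients `(-k * A) ^ (k - 1) / k!`
of `W (A * w) / A`, `W` being Lambert's function, solve it: for `n ≥ 2` the `n`-th equation is,
up to a factor, the vanishing of the `(n - 1)`-st finite difference of `x ↦ x ^ (n - 2)`.

Comparing coefficients needs no composition of power series: by induction on `n`, both
`z - ∑ k < n, γ k * f z ^ k` and `F w - ∑ k < n, γ k * w ^ k` vanish to order `n` at `0`,
and since `f z ~ z` their leading coefficients agree.
-/

open Finset Filter Topology
open scoped Nat

section PowerSeries

variable {𝕜 : Type*} [NontriviallyNormedField 𝕜]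

theorem tendsto_nhdsNE_of_hasSum_pow {b : ℕ → 𝕜} {H : 𝕜 → 𝕜} {r : ℝ} (hr : 0 < r)
    (hH : ∀ z, z ≠ 0 → ‖z‖ < r → HasSum (fun m => b m * z ^ m) (H z)) :
    Tendsto H (𝓝[≠] 0) (𝓝 (b 0)) := by
  classical
  obtain ⟨x, hx0, hxr⟩ := NormedField.exists_norm_lt 𝕜 hr
  have hx0' : (0 : ENNReal) < ‖x‖₊ := by simpa using hx0
  set p := FormalMultilinearSeries.ofScalars 𝕜 b
  have hp : HasFPowerSeriesOnBall (Function.update H 0 (b 0)) p 0 ‖x‖₊ := by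
    refine ⟨?_, hx0', fun {z} hz => ?_⟩
    · have hsum := (hH x (norm_pos_iff.mp hx0) hxr).summable
      exact p.le_radius_of_tendsto
        (by simpa [p, norm_mul, norm_pow] using hsum.tendsto_atTop_zero.norm)
    · rw [FormalMultilinearSeries.ofScalars_apply_eq', zero_add]
      simp only [smul_eq_mul]
      by_cases hz0 : z = 0
      · subst hz0
        rw [Function.update_self]
        simpa using hasSum_single (f := fun n => b n * (0 : 𝕜) ^ n) 0 fun m hm => by simp [hm]
      · rw [Function.update_of_ne hz0]
        refine hH z hz0 (lt_of_lt_of_le ?_ hxr.le)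
        simpa [Metric.mem_eball, edist_zero_right, enorm_eq_nnnorm] using hz
  have := (hp.continuousOn.continuousAt
    (Metric.isOpen_eball.mem_nhds (Metric.mem_eball_self hx0'))).tendsto
  rw [Function.update_self] at this
  exact (this.mono_left nhdsWithin_le_nhds).congr' <|
    eventually_nhdsWithin_of_forall fun z hz => Function.update_of_ne hz _ _

theorem tendsto_sub_sum_range_div_pow {b : ℕ → 𝕜} {H : 𝕜 → 𝕜} {r : ℝ} (hr : 0 < r)
    (hH : ∀ z, ‖z‖ < r → HasSum (fun m => b m * z ^ m) (H z)) (n : ℕ) :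
    Tendsto (fun z => (H z - ∑ k ∈ range n, b k * z ^ k) / z ^ n) (𝓝[≠] 0)
      (𝓝 (b n)) := by
  have hshift : ∀ z, z ≠ 0 → ‖z‖ < r → HasSum (fun m => b (m + n) * z ^ m)
      ((H z - ∑ k ∈ range n, b k * z ^ k) / z ^ n) := fun z hz0 hzr => by
    convert ((hasSum_nat_add_iff' n).mpr (hH z hzr)).div_const (z ^ n) using 2 with m
    rw [pow_add, ← mul_assoc, mul_div_cancel_right₀ _ (pow_ne_zero n hz0)]
  simpa using tendsto_nhdsNE_of_hasSum_pow hr hshift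

theorem coeff_comp_eq_sum {f F G : 𝕜 → 𝕜} {e : ℕ → ℕ → 𝕜} {γ c : ℕ → 𝕜}
    (he : ∀ k z, HasSum (fun m => e k m * z ^ m) (f z ^ k))
    (he_lt : ∀ k m, m < k → e k m = 0) (he_diag : ∀ k, e k k = 1)
    (hF : ∃ r > 0, ∀ w, ‖w‖ < r → HasSum (fun m => γ m * w ^ m) (F w))
    (hG : ∃ ρ > 0, ∀ z, ‖z‖ < ρ → HasSum (fun m => c m * z ^ m) (G z))
    (hFG : ∀ᶠ z in 𝓝 0, F (f z) = G z) (n : ℕ) :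
    c n = ∑ k ∈ range (n + 1), γ k * e k n := by
  obtain ⟨r, hr, hF⟩ := hF
  obtain ⟨ρ, hρ, hG⟩ := hG
  have hf_div : Tendsto (fun z => f z / z) (𝓝[≠] 0) (𝓝 1) := by
    simpa [he_lt 1 0 one_pos, he_diag 1] using
      tendsto_sub_sum_range_div_pow one_pos (fun z _ => he 1 z) 1
  have hf : Tendsto f (𝓝[≠] 0) (𝓝[≠] 0) := by
    refine tendsto_nhdsWithin_iff.mpr ⟨?_, ?_⟩
    · have := hf_div.mul (tendsto_nhdsWithin_of_tendsto_nhds (tendsto_id (x := 𝓝 (0 : 𝕜))))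
      rw [mul_zero] at this
      refine this.congr' (eventually_nhdsWithin_of_forall fun z hz => ?_)
      exact div_mul_cancel₀ _ hz
    · filter_upwards [hf_div.eventually_ne one_ne_zero] with z hz
      exact left_ne_zero_of_mul (by simpa [div_eq_mul_inv] using hz)
  induction n using Nat.strong_induction_on with
  | _ n ih =>
  set b : ℕ → 𝕜 := fun m => c m - ∑ k ∈ range n, γ k * e k m
  have hg : ∀ z, ‖z‖ < ρ →
      HasSum (fun m => b m * z ^ m) (G z - ∑ k ∈ range n, γ k * f z ^ k) := fun z hz => by
    have hpoly : HasSum (fun m => ∑ k ∈ range n, γ k * e k m * z ^ m)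
        (∑ k ∈ range n, γ k * f z ^ k) :=
      hasSum_sum fun k _ => by simpa only [mul_assoc] using (he k z).mul_left (γ k)
    simpa only [b, sub_mul, sum_mul] using (hG z hz).sub hpoly
  have hb : ∀ m < n, b m = 0 := fun m hm => by
    rw [sub_eq_zero, ih m hm]
    refine sum_subset (range_subset_range.mpr hm) fun k _ hk => ?_
    rw [he_lt k m (by simpa using hk), mul_zero]
  have hb_low : ∀ z : 𝕜, ∑ k ∈ range n, b k * z ^ k = 0 := fun z =>
    sum_eq_zero fun k hk => by rw [hb k (mem_range.mp hk), zero_mul]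
  have hb_lim := tendsto_sub_sum_range_div_pow hρ hg n
  simp only [hb_low, sub_zero] at hb_lim
  have hγ_lim := ((tendsto_sub_sum_range_div_pow hr hF n).comp hf).mul (hf_div.pow n)
  rw [one_pow, mul_one] at hγ_lim
  have hbγ : b n = γ n := by
    refine tendsto_nhds_unique hb_lim (hγ_lim.congr' ?_)
    filter_upwards [hf self_mem_nhdsWithin, self_mem_nhdsWithin,
      nhdsWithin_le_nhds hFG] with z hfz hz hFGz
    simp only [Function.comp_apply, hFGz, div_pow]
    field_simp [pow_ne_zero n hfz, pow_ne_zero n hz]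
  rw [sum_range_succ, he_diag, mul_one, ← hbγ, add_sub_cancel]

end PowerSeries

theorem eq_of_sum_range_mul_triangular {R : Type*} [Ring R] {a a' : ℕ → R}
    {e : ℕ → ℕ → R} (he : ∀ n, e n n = 1)
    (h : ∀ n, ∑ k ∈ range (n + 1), a k * e k n = ∑ k ∈ range (n + 1), a' k * e k n) :
    a = a' := by
  funext n
  induction n using Nat.strong_induction_on with
  | _ n ih =>
  have hn := h n
  rw [sum_range_succ, sum_range_succ, he, mul_one, mul_one,
    sum_congr rfl fun k hk => by rw [ih k (mem_range.mp hk)]] at hn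
  exact add_left_cancel hn

theorem alternating_sum_range_choose_mul_pow_eq_zero {R : Type*} [CommRing R] {d m : ℕ}
    (h : d < m) (x : R) : ∑ j ∈ range (m + 1), (-1) ^ j * m.choose j * (x + j) ^ d = 0 := by
  have hdiff := congr_fun (fwdDiff_iter_pow_eq_zero_of_lt (R := R) h) x
  rw [fwdDiff_iter_eq_sum_shift, Pi.zero_apply] at hdiff
  calc ∑ j ∈ range (m + 1), (-1) ^ j * m.choose j * (x + j) ^ d
      = (-1) ^ m *
          ∑ j ∈ range (m + 1), ((-1 : ℤ) ^ (m - j) * m.choose j) • (x + j • 1) ^ d := by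
        rw [mul_sum]
        refine sum_congr rfl fun j hj => ?_
        obtain ⟨i, rfl⟩ := Nat.exists_eq_add_of_le (mem_range_succ_iff.mp hj)
        rw [Nat.add_sub_cancel_left, zsmul_eq_mul, nsmul_one]
        push_cast
        have hsq : (-1 : R) ^ i * (-1) ^ i = 1 := by rw [← mul_pow]; norm_num
        linear_combination -((-1) ^ j * ((j + i).choose j : R) * (x + j) ^ d) * hsq
    _ = 0 := by rw [hdiff, mul_zero]

noncomputable def expPowCoeff (a : ℂ) (k m : ℕ) : ℂ :=
  if k ≤ m then (k * a) ^ (m - k) / (m - k)! else 0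

theorem expPowCoeff_of_le (a : ℂ) {k m : ℕ} (h : k ≤ m) :
    expPowCoeff a k m = (k * a) ^ (m - k) / (m - k)! :=
  if_pos h

theorem expPowCoeff_of_lt (a : ℂ) {k m : ℕ} (h : m < k) : expPowCoeff a k m = 0 :=
  if_neg (not_le.mpr h)

theorem expPowCoeff_self (a : ℂ) (k : ℕ) : expPowCoeff a k k = 1 := by
  simp [expPowCoeff]

theorem hasSum_expPowCoeff (a : ℂ) (k : ℕ) (z : ℂ) :
    HasSum (fun m => expPowCoeff a k m * z ^ m) ((z * Complex.exp (a * z)) ^ k) := by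
  have hexp : HasSum (fun j => (k * a * z) ^ j / j !) (Complex.exp (k * a * z)) := by
    rw [Complex.exp_eq_exp_ℂ]
    exact NormedSpace.expSeries_div_hasSum_exp _
  rw [mul_pow, ← Complex.exp_nat_mul, ← mul_assoc, ← hasSum_nat_add_iff' k,
    sum_eq_zero fun m hm => by rw [expPowCoeff_of_lt a (mem_range.mp hm), zero_mul], sub_zero]
  refine (hexp.mul_left (z ^ k)).congr_fun fun j => ?_
  rw [expPowCoeff_of_le a (Nat.le_add_left k j), Nat.add_sub_cancel, pow_add, mul_pow]
  ring

noncomputable def lambertCoeff (a : ℂ) : ℕ → ℂ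
  | 0 => 0
  | k + 1 => (-(k + 1) * a) ^ k / (k + 1)!

theorem lambertCoeff_succ_mul_expPowCoeff (a : ℂ) {d j : ℕ} (hj : j ≤ d + 1) :
    lambertCoeff a (j + 1) * expPowCoeff a (j + 1) (d + 2)
      = a ^ (d + 1) / (d + 1)! * ((-1) ^ j * (d + 1).choose j * (1 + j) ^ d) := by
  obtain ⟨i, hi⟩ := Nat.exists_eq_add_of_le hj
  have hfac : ((d + 1)! : ℂ) = (d + 1).choose j * j ! * i ! := by
    rw [← show d + 1 - j = i by omega]
    exact_mod_cast (Nat.choose_mul_factorial_mul_factorial hj).symm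
  have hpow : ((j : ℂ) + 1) ^ (j + i) = (j + 1) * (1 + j) ^ d := by
    rw [← hi, pow_succ]; ring
  have hchoose : ((j + i).choose j : ℂ) ≠ 0 := by exact_mod_cast (Nat.choose_pos (by omega)).ne'
  rw [lambertCoeff, expPowCoeff_of_le a (by omega), show d + 2 - (j + 1) = i by omega, hfac,
    Nat.factorial_succ]
  push_cast
  rw [show d + 1 = j + i from hi, neg_mul, neg_pow, mul_pow, mul_pow]
  field_simp
  linear_combination a ^ (j + i) / (j ! * i ! : ℂ) * hpow

theorem sum_range_lambertCoeff_mul_expPowCoeff (a : ℂ) (n : ℕ) :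
    ∑ k ∈ range (n + 1), lambertCoeff a k * expPowCoeff a k n = if n = 1 then 1 else 0 := by
  match n with
  | 0 => simp [lambertCoeff]
  | 1 => simp [sum_range_succ, lambertCoeff, expPowCoeff_self]
  | d + 2 =>
    rw [sum_range_succ', lambertCoeff, zero_mul, add_zero,
      sum_congr rfl fun j hj => lambertCoeff_succ_mul_expPowCoeff a (mem_range_succ_iff.mp hj),
      ← mul_sum, alternating_sum_range_choose_mul_pow_eq_zero (Nat.lt_succ_self d), mul_zero,
      if_neg (by omega)]

theorem lambertCoeff_succ (a : ℂ) (p : ℕ) :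
    lambertCoeff a (p + 1) = (-1) ^ p * (p + 1 : ℂ) ^ (p - 1) * a ^ p / p ! := by
  rcases p with _ | q
  · simp [lambertCoeff]
  · have hq : (q : ℂ) + 1 + 1 ≠ 0 := by norm_cast
    rw [lambertCoeff, Nat.factorial_succ, Nat.add_sub_cancel, neg_mul, neg_pow, mul_pow]
    push_cast
    field_simp
    ring

theorem prod_range_div_add_one {K : Type*} [Field K] [CharZero K] (x : K) (p : ℕ) :
    ∏ m ∈ range p, x / (m + 1) = x ^ p / p ! := by
  rw [prod_div_distrib, prod_const, card_range, ← prod_range_add_one_eq_factorial]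
  push_cast
  rfl

theorem norm_lambertCoeff_succ {A : ℝ} (hA : 0 ≤ A) (p : ℕ) :
    ‖lambertCoeff A (p + 1)‖ = ((p + 1) * A) ^ p / (p + 1)! := by
  rw [lambertCoeff, norm_div, norm_pow, norm_mul, norm_neg, Complex.norm_real,
    Real.norm_of_nonneg hA]
  norm_cast

theorem inverse_coeff_exp_general (A : ℝ) (hA : 0 < A)
    (f : ℂ → ℂ) (hf : ∀ z : ℂ, f z = z * Complex.exp ((A : ℂ) * z))
    (F : ℂ → ℂ) (hFf : ∀ᶠ z in nhds (0 : ℂ), F (f z) = z)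
    (γ : ℕ → ℂ)
    (hF : ∃ r > 0, ∀ w : ℂ, ‖w‖ < r → HasSum (fun n : ℕ => γ n * w ^ n) (F w))
    (n : ℕ) (hn : 2 ≤ n) :
    γ n = (-1) ^ (n - 1) * (n : ℂ) ^ (n - 2) * (A : ℂ) ^ (n - 1) / ((Nat.factorial (n - 1) : ℕ) : ℂ) ∧
    ‖γ n‖ = (1 / (n : ℝ)) * ∏ m ∈ Finset.range (n - 1), ((n : ℝ) * A / ((m : ℝ) + 1)) := by
  have hid : ∀ z : ℂ, HasSum (fun m => (if m = 1 then 1 else 0) * z ^ m) z := fun z => by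
    have := hasSum_single (f := fun m => (if m = 1 then (1 : ℂ) else 0) * z ^ m) 1
      fun m hm => by simp [hm]
    rwa [if_pos rfl, one_mul, pow_one] at this
  have hγ : γ = lambertCoeff A := by
    refine eq_of_sum_range_mul_triangular (expPowCoeff_self A) fun k => ?_
    rw [sum_range_lambertCoeff_mul_expPowCoeff]
    exact (coeff_comp_eq_sum (fun k z => hf z ▸ hasSum_expPowCoeff A k z)
      (fun _ _ => expPowCoeff_of_lt A) (expPowCoeff_self A) hF
      ⟨1, one_pos, fun z _ => hid z⟩ (G := id) hFf k).symm
  obtain ⟨p, rfl⟩ : ∃ p, n = p + 1 := ⟨n - 1, by omega⟩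
  rw [hγ, Nat.add_sub_cancel, show p + 1 - 2 = p - 1 by omega]
  refine ⟨by rw [lambertCoeff_succ]; push_cast; rfl, ?_⟩
  rw [norm_lambertCoeff_succ hA.le, prod_range_div_add_one, Nat.factorial_succ]
  push_cast
  field_simp

/-- For `A > 0` and `f(z) = z e^{Az}`, the inverse `F = f⁻¹` near the origin has
Taylor coefficients `γ_n = (-1)^{n-1} n^{n-2} A^{n-1}/(n-1)!` for `n ≥ 2`; in particular
`|γ_n| = (1/n) ∏_{m=0}^{n-2} (nA/(m+1))`, so the inverse coefficient bound for
`S*[A,0]` is attained. -/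
theorem inverse_coeff_exp (A : ℝ) (hA : 0 < A)
    (f : ℂ → ℂ) (hf : ∀ z : ℂ, f z = z * Complex.exp ((A : ℂ) * z))
    (F : ℂ → ℂ) (hFf : ∀ᶠ z in nhds (0 : ℂ), F (f z) = z)
    (γ : ℕ → ℂ) (hγ0 : γ 0 = 0) (hγ1 : γ 1 = 1)
    (hF : ∃ r > 0, ∀ w : ℂ, ‖w‖ < r → HasSum (fun n : ℕ => γ n * w ^ n) (F w))
    (n : ℕ) (hn : 2 ≤ n) :
    γ n = (-1) ^ (n - 1) * (n : ℂ) ^ (n - 2) * (A : ℂ) ^ (n - 1) / ((Nat.factorial (n - 1) : ℕ) : ℂ) ∧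
    ‖γ n‖ = (1 / (n : ℝ)) * ∏ m ∈ Finset.range (n - 1), ((n : ℝ) * A / ((m : ℝ) + 1)) :=
  inverse_coeff_exp_general A hA f hf F hFf γ hF n hn
end
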